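/- arXiv:2108.09687 — 4 statements merged into one kernel-verified Lean document; each statement's English description precedes it below -/
import Mathlib

section
/- (Lemma 2.3.) For every integer n ≥ 1 and every (z₁, …, zₙ) ∈ ℂⁿ, the real Jacobian determinant of ψ at (z₁, …, zₙ) equals ∏_{1 ≤ j < k ≤ n} |z_j − z_k|². -/
/-!
`ψ` is holomorphic, so its real Jacobian determinant is the `ℂ/ℝ`-norm `|det J|²` of its complex
Jacobian `J`. Differentiating `∏ (X - w l)` in `w j` gives `-∏_{l ≠ j} (X - z l)`, so up to sign
and the order of the rows, the columns of `J` are the coefficient vectors of these polynomials.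
Multiplying by the Vandermonde matrix `V` of `z` evaluates them at the nodes, which gives the
diagonal matrix with entries `∏_{l ≠ j} (z j - z l)`, of total modulus `|det V|²`. Hence
`|det J| = |det V| = ∏_{j<k} |z j - z k|` when the `z j` are distinct; otherwise `J` has two equal
columns and both sides vanish.
-/

open Finset Polynomial Matrix Lagrange

/-- The paper's `ψ`: slot `k` is the coefficient of `X ^ (n - 1 - k)` in `∏ (X - w j)`. -/
def rootsToCoeffs {R : Type*} [CommRing R] (n : ℕ) (w : Fin n → R) : Fin n → R :=
  fun k => (-1) ^ ((k : ℕ) + 1) * (univ.val.map w).esymm ((k : ℕ) + 1)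

theorem Finset.sum_powersetCard_succ_sum_erase {ι M : Type*} [DecidableEq ι] [AddCommMonoid M]
    (s : Finset ι) (m : ℕ) (f : Finset ι → ι → M) :
    ∑ t ∈ s.powersetCard (m + 1), ∑ i ∈ t, f (t.erase i) i
      = ∑ i ∈ s, ∑ u ∈ (s.erase i).powersetCard m, f u i := by
  rw [sum_comm' (t' := s) (s' := fun i => (s.powersetCard (m + 1)).filter (i ∈ ·))]
  · refine sum_congr rfl fun i hi => ?_
    refine sum_nbij' (fun t => t.erase i) (insert i) ?_ ?_ ?_ ?_ fun _ _ => rfl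
    · intro t ht
      rw [mem_filter, mem_powersetCard] at ht
      rw [mem_powersetCard, card_erase_of_mem ht.2, ht.1.2]
      exact ⟨erase_subset_erase _ ht.1.1, rfl⟩
    · intro u hu
      rw [mem_powersetCard] at hu
      have hiu : i ∉ u := fun h => notMem_erase i s (hu.1 h)
      rw [mem_filter, mem_powersetCard, card_insert_of_notMem hiu, hu.2]
      exact ⟨⟨insert_subset hi (hu.1.trans (erase_subset _ _)), rfl⟩, mem_insert_self i u⟩
    · intro t ht
      exact insert_erase (mem_filter.mp ht).2
    · intro u hu
      exact erase_insert fun h => notMem_erase i s ((mem_powersetCard.mp hu).1 h)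
  · intro t i
    simp only [mem_filter, mem_powersetCard]
    exact ⟨fun ⟨⟨hts, hcard⟩, hit⟩ => ⟨⟨⟨hts, hcard⟩, hit⟩, hts hit⟩, fun ⟨h, _⟩ => h⟩

theorem hasFDerivAt_esymm_map_val {ι 𝕜 : Type*} [Fintype ι] [DecidableEq ι]
    [NontriviallyNormedField 𝕜] (s : Finset ι) (m : ℕ) (z : ι → 𝕜) :
    HasFDerivAt (fun w : ι → 𝕜 => (s.val.map w).esymm (m + 1))
      (∑ i ∈ s, ((s.erase i).val.map z).esymm m •
        (ContinuousLinearMap.proj i : (ι → 𝕜) →L[𝕜] 𝕜)) z := by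
  have h := HasFDerivAt.fun_sum (u := s.powersetCard (m + 1)) fun t _ =>
    hasFDerivAt_finsetProd (𝕜 := 𝕜) (u := t) (x := z)
  rw [sum_powersetCard_succ_sum_erase s m fun u i => (∏ j ∈ u, z j) • ContinuousLinearMap.proj i]
    at h
  simp only [← Finset.sum_smul] at h
  simp only [esymm_map_val]
  exact h

theorem Lagrange.coeff_nodal_card_sub {ι R : Type*} [CommRing R] (s : Finset ι) (v : ι → R)
    {k : ℕ} (hk : k ≤ #s) :
    (nodal s v).coeff (#s - k) = (-1) ^ k * (s.val.map v).esymm k := by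
  have h := Multiset.prod_X_sub_C_coeff (s.val.map v) (k := #s - k) (by simp)
  rw [Multiset.card_map, card_val, Nat.sub_sub_self hk, Multiset.map_map] at h
  exact h

section

variable {n : ℕ}

theorem Lagrange.coeff_rev_nodal_erase {R : Type*} [CommRing R] (z : Fin n → R) (j k : Fin n) :
    (nodal (univ.erase j) z).coeff k.rev = (-1) ^ (k : ℕ) * ((univ.erase j).val.map z).esymm k := by
  convert coeff_nodal_card_sub (univ.erase j) z (k := k) _ using 2
  · simp only [Fin.val_rev, card_erase_of_mem (mem_univ j), card_univ, Fintype.card_fin]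
    omega
  · simp only [card_erase_of_mem (mem_univ j), card_univ, Fintype.card_fin]
    omega

noncomputable def nodalCoeffMatrix {R : Type*} [CommRing R] (z : Fin n → R) :
    Matrix (Fin n) (Fin n) R :=
  of fun i j => (nodal (univ.erase j) z).coeff i

theorem hasFDerivAt_rootsToCoeffs {𝕜 : Type*} [NontriviallyNormedField 𝕜] [CompleteSpace 𝕜]
    (z : Fin n → 𝕜) :
    HasFDerivAt (rootsToCoeffs n)
      (LinearMap.toContinuousLinearMap
        (toLin' (-(nodalCoeffMatrix z).submatrix Fin.revPerm id))) z := by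
  refine hasFDerivAt_pi'.mpr fun k => ?_
  refine ((hasFDerivAt_esymm_map_val univ k z).const_mul _).congr_fderiv ?_
  ext v
  simp only [_root_.smul_apply, _root_.sum_apply, ContinuousLinearMap.proj_apply,
    ContinuousLinearMap.comp_apply, LinearMap.coe_toContinuousLinearMap', toLin'_apply, mulVec,
    dotProduct, Matrix.neg_apply, submatrix_apply, nodalCoeffMatrix, of_apply, Fin.revPerm_apply,
    id_eq, coeff_rev_nodal_erase, smul_eq_mul, mul_sum]
  exact sum_congr rfl fun j _ => by ring

theorem vandermonde_mul_nodalCoeffMatrix {R : Type*} [CommRing R] [Nontrivial R]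
    (z : Fin n → R) :
    vandermonde z * nodalCoeffMatrix z = diagonal fun j => ∏ l ∈ univ.erase j, (z j - z l) := by
  ext m j
  have hdeg : (nodal (univ.erase j) z).natDegree < n := by
    rw [natDegree_nodal, card_erase_of_mem (mem_univ j), card_univ, Fintype.card_fin]
    exact Nat.sub_lt (Nat.zero_lt_of_lt j.isLt) one_pos
  have heval : (vandermonde z * nodalCoeffMatrix z) m j = (nodal (univ.erase j) z).eval (z m) := by
    rw [eval_eq_sum_range' hdeg, mul_apply, ← Fin.sum_univ_eq_sum_range]
    simp [nodalCoeffMatrix, vandermonde_apply, mul_comm]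
  rw [heval]
  rcases eq_or_ne m j with rfl | hmj
  · rw [diagonal_apply_eq, eval_nodal]
  · rw [diagonal_apply_ne _ hmj, eval_nodal_at_node (mem_erase.mpr ⟨hmj, mem_univ m⟩)]

section NormedField

variable {𝕜 : Type*} [NormedField 𝕜]

theorem norm_det_vandermonde (z : Fin n → 𝕜) :
    ‖(vandermonde z).det‖
      = ∏ p ∈ univ.filter (fun p : Fin n × Fin n => p.1 < p.2), ‖z p.1 - z p.2‖ := by
  rw [det_vandermonde, norm_prod, prod_filter, Fintype.prod_prod_type]
  refine prod_congr rfl fun i _ => ?_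
  rw [norm_prod, ← filter_lt_eq_Ioi, prod_filter]
  exact prod_congr rfl fun j _ => by rw [norm_sub_rev]

theorem norm_det_vandermonde_sq (z : Fin n → 𝕜) :
    ‖(vandermonde z).det‖ ^ 2 = ∏ i, ∏ j ∈ univ.erase i, ‖z i - z j‖ := by
  simp_rw [← compl_singleton, ← prod_prod_Ioi_mul_eq_prod_prod_off_diag, det_vandermonde,
    norm_prod, ← prod_pow]
  exact prod_congr rfl fun i _ => prod_congr rfl fun j _ => by rw [sq, norm_sub_rev]

theorem norm_det_nodalCoeffMatrix (z : Fin n → 𝕜) :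
    ‖(nodalCoeffMatrix z).det‖ = ‖(vandermonde z).det‖ := by
  by_cases hz : Function.Injective z
  · have hV : ‖(vandermonde z).det‖ ≠ 0 :=
      norm_ne_zero_iff.mpr (det_vandermonde_ne_zero_iff.mpr hz)
    have h := congrArg (‖det ·‖) (vandermonde_mul_nodalCoeffMatrix z)
    simp only [det_mul, det_diagonal, norm_mul, norm_prod, ← norm_det_vandermonde_sq, sq] at h
    exact mul_left_cancel₀ hV h
  · obtain ⟨j, k, hzjk, hjk⟩ := Function.not_injective_iff.mp hz
    have hcol : ∀ i, nodalCoeffMatrix z i j = nodalCoeffMatrix z i k := fun i => by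
      simp only [nodalCoeffMatrix, of_apply, nodal_erase_eq_nodal_div (mem_univ _), hzjk]
    rw [det_zero_of_column_eq hjk hcol, det_vandermonde_eq_zero_iff.mpr ⟨j, k, hzjk, hjk⟩]

theorem norm_det_neg_submatrix_perm {ι : Type*} [Fintype ι] [DecidableEq ι]
    (σ : Equiv.Perm ι) (A : Matrix ι ι 𝕜) :
    ‖(-A.submatrix σ id).det‖ = ‖A.det‖ := by
  rcases Int.units_eq_one_or (Equiv.Perm.sign σ) with h | h <;> simp [det_neg, det_permute, h]

end NormedField

end

theorem real_jacobian_roots_to_coeffs_general (n : ℕ) (z : Fin n → ℂ) :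
    LinearMap.det
        ((fderiv ℝ (fun w : Fin n → ℂ => fun k : Fin n =>
            (-1 : ℂ) ^ ((k : ℕ) + 1) * (Finset.univ.val.map w).esymm ((k : ℕ) + 1)) z).toLinearMap)
      = ∏ p ∈ Finset.univ.filter (fun p : Fin n × Fin n => p.1 < p.2), ‖z p.1 - z p.2‖ ^ 2 := by
  change LinearMap.det (fderiv ℝ (rootsToCoeffs n) z).toLinearMap = _
  rw [((hasFDerivAt_rootsToCoeffs z).restrictScalars ℝ).fderiv,
    ContinuousLinearMap.coe_restrictScalars, LinearMap.coe_toContinuousLinearMap,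
    LinearMap.det_restrictScalars, LinearMap.det_toLin', Algebra.norm_complex_apply,
    Complex.normSq_eq_norm_sq, norm_det_neg_submatrix_perm, norm_det_nodalCoeffMatrix,
    norm_det_vandermonde, prod_pow]

/-- **Lemma 2.3.** The real Jacobian determinant of the map
`ψ : ℂⁿ → ℂⁿ`, `ψ(z) = (−e₁(z), e₂(z), …, (−1)ⁿ eₙ(z))` (roots to non-leading coefficients of
the monic polynomial `∏ (X − zⱼ)`) equals `∏_{j<k} |z_j − z_k|²`. -/
theorem real_jacobian_roots_to_coeffs (n : ℕ) (hn : 1 ≤ n) (z : Fin n → ℂ) :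
    LinearMap.det
        ((fderiv ℝ (fun w : Fin n → ℂ => fun k : Fin n =>
            (-1 : ℂ) ^ ((k : ℕ) + 1) * (Finset.univ.val.map w).esymm ((k : ℕ) + 1)) z).toLinearMap)
      = ∏ p ∈ Finset.univ.filter (fun p : Fin n × Fin n => p.1 < p.2), ‖z p.1 - z p.2‖ ^ 2 :=
  real_jacobian_roots_to_coeffs_general n z
end

section
/- For every v ∈ ℂ and every ϱ > 0, the double integral ∫_{ℂ^{n+1}} ( ∫_0^{2π} |Φ_η′(ϱe^{iθ}) / (Φ_η(ϱe^{iθ}) − v)| · ϱ dθ ) dγ(η) is finite; in particular the function (η, θ) ↦ Φ_η′(ϱe^{iθ})/(Φ_η(ϱe^{iθ}) − v) is integrable with respect to the product of γ and arclength measure on the circle of radius ϱ. -/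
open MeasureTheory Polynomial Filter Metric
open ComplexConjugate
open scoped Classical

/-- The standard complex Gaussian probability measure on `ℂ^{n+1}`, with density
`π^{-(n+1)} exp(-∑ |η_j|²)` with respect to Lebesgue measure. -/
noncomputable def gaussianC (n : ℕ) : Measure (Fin (n + 1) → ℂ) :=
  volume.withDensity fun η =>
    ENNReal.ofReal ((Real.pi ^ (n + 1))⁻¹ * Real.exp (-∑ j, ‖η j‖ ^ 2))

/-- The random polynomial `Φ_η = ∑_{j=0}^n η_j φ_j`. -/
noncomputable def Phi (n : ℕ) (φ : ℕ → Polynomial ℂ) (η : Fin (n + 1) → ℂ) : Polynomial ℂ :=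
  ∑ j : Fin (n + 1), Polynomial.C (η j) * φ (j : ℕ)

/-- The number of zeros of `Φ_η − v` lying in `Θ`, counted with multiplicity. -/
noncomputable def Nzeros (n : ℕ) (φ : ℕ → Polynomial ℂ) (Θ : Set ℂ) (v : ℂ)
    (η : Fin (n + 1) → ℂ) : ℕ :=
  Multiset.card ((Phi n φ η - Polynomial.C v).roots.filter (· ∈ Θ))

/-- Diagonal Christoffel–Darboux kernel `K_n(z,z) = ∑_{j=0}^n |φ_j(z)|²`. -/
noncomputable def Kd (φ : ℕ → Polynomial ℂ) (n : ℕ) (z : ℂ) : ℝ :=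
  ∑ j : Fin (n + 1), ‖(φ (j : ℕ)).eval z‖ ^ 2

/-- `K_n^{(0,1)}(z,z) = ∑_{j=0}^n φ_j(z) conj(φ_j'(z))`. -/
noncomputable def K01 (φ : ℕ → Polynomial ℂ) (n : ℕ) (z : ℂ) : ℂ :=
  ∑ j : Fin (n + 1), (φ (j : ℕ)).eval z * conj ((Polynomial.derivative (φ (j : ℕ))).eval z)

/-- `K_n^{(1,1)}(z,z) = ∑_{j=0}^n |φ_j'(z)|²`. -/
noncomputable def K11 (φ : ℕ → Polynomial ℂ) (n : ℕ) (z : ℂ) : ℝ :=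
  ∑ j : Fin (n + 1), ‖(Polynomial.derivative (φ (j : ℕ))).eval z‖ ^ 2

/-- The density `ρ_{n,v}(z)` of Theorem 1.3. -/
noncomputable def rhoDens (φ : ℕ → Polynomial ℂ) (n : ℕ) (v z : ℂ) : ℝ :=
  (1 / Real.pi) *
    (K11 φ n z / Kd φ n z -
      (‖K01 φ n z‖ ^ 2 / (Kd φ n z) ^ 2) * (1 - ‖v‖ ^ 2 / Kd φ n z)) *
    Real.exp (-‖v‖ ^ 2 / Kd φ n z)

/-! Fix `θ` and put `z = ϱ e^{iθ}`. Since `φ₀ = 1`, `Φ_η(z) - v = η₀ - d` with `d` depending only on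
`η₁, …, ηₙ`, while `Φ_η'(z)` does not involve `η₀` at all. Integrating `η₀` first,
`∫ |w - d|⁻¹ e^{-|w|²} dw` is bounded uniformly in `d` because `|u|⁻¹` is locally integrable in
the plane; what is left is a first Gaussian moment times `max_j |φ_j'(z)|`, which is bounded on
the circle. Tonelli then integrates this bound, uniform in `θ`, over `(0, 2π]`. -/

open scoped ENNReal

theorem lintegral_fin_cons {E : Type*} [MeasureSpace E] [SigmaFinite (volume : Measure E)]
    {n : ℕ} {f : (Fin (n + 1) → E) → ℝ≥0∞} (hf : Measurable f) :
    ∫⁻ η, f η = ∫⁻ y : Fin n → E, ∫⁻ w : E, f (Fin.cons w y) := by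
  let e := MeasurableEquiv.piFinSuccAbove (fun _ : Fin (n + 1) => E) 0
  rw [← (volume_preserving_piFinSuccAbove (fun _ : Fin (n + 1) => E) 0).symm.lintegral_comp_emb
    e.symm.measurableEmbedding, Measure.volume_eq_prod,
    lintegral_prod_symm (fun q => f (e.symm q)) (hf.comp e.symm.measurable).aemeasurable]
  simp [e, MeasurableEquiv.piFinSuccAbove_symm_apply, Fin.consEquiv]

theorem lintegral_prod_smul_restrict_enorm {α β E : Type*} [MeasurableSpace α]
    [MeasurableSpace β] [NormedAddCommGroup E] {μ : Measure α} {ν : Measure β} [SFinite ν]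
    {c : ℝ} {s : Set β} {F : α × β → E}
    (hF : AEStronglyMeasurable F (μ.prod (ENNReal.ofReal c • ν.restrict s))) :
    ∫⁻ p, ‖F p‖ₑ ∂μ.prod (ENNReal.ofReal c • ν.restrict s) =
      ∫⁻ x, ∫⁻ y in s, ENNReal.ofReal (‖F (x, y)‖ * c) ∂ν ∂μ := by
  rw [lintegral_prod _ hF.enorm]
  refine lintegral_congr fun x => ?_
  rw [lintegral_smul_measure, smul_eq_mul, ← lintegral_const_mul' _ _ ENNReal.ofReal_ne_top]
  refine lintegral_congr fun y => ?_
  rw [ENNReal.ofReal_mul (norm_nonneg _), ofReal_norm, mul_comm]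

theorem lintegral_ball_ofReal_inv_norm_lt_top {E : Type*} [NormedAddCommGroup E]
    [NormedSpace ℝ E] [FiniteDimensional ℝ E] [MeasurableSpace E] [BorelSpace E]
    {μ : Measure E} [μ.IsAddHaarMeasure] (hE : 2 ≤ Module.finrank ℝ E) (r : ℝ) :
    ∫⁻ u in ball (0 : E) r, ENNReal.ofReal ‖u‖⁻¹ ∂μ < ⊤ := by
  refine Integrable.lintegral_lt_top (integrableOn_ball_of_norm_le_rpow (C := 1) (α := 1)
    (by omega) (by exact_mod_cast hE) (.of_forall fun u => ?_) (by fun_prop))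
  simp [Real.rpow_neg_one]

section InnerProductSpace

variable {V : Type*} [NormedAddCommGroup V] [InnerProductSpace ℝ V] [FiniteDimensional ℝ V]
  [MeasurableSpace V] [BorelSpace V]

theorem integrable_exp_neg_mul_sq_norm {b : ℝ} (hb : 0 < b) :
    Integrable fun v : V => Real.exp (-b * ‖v‖ ^ 2) := by
  refine (GaussianFourier.integrable_cexp_neg_mul_sq_norm_add (V := V) (b := b)
    (by simpa using hb) 0 0).norm.congr (.of_forall fun v => ?_)
  simp only [zero_mul, add_zero, Complex.norm_exp]
  norm_cast

theorem lintegral_ofReal_inv_norm_sub_mul_exp_le (d : V) :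
    ∫⁻ w, ENNReal.ofReal (‖w - d‖⁻¹ * Real.exp (-‖w‖ ^ 2)) ≤
      (∫⁻ u in ball (0 : V) 1, ENNReal.ofReal ‖u‖⁻¹) +
        ∫⁻ w : V, ENNReal.ofReal (Real.exp (-‖w‖ ^ 2)) := by
  have hpt : ∀ w : V, ENNReal.ofReal (‖w - d‖⁻¹ * Real.exp (-‖w‖ ^ 2)) ≤
      (ball (0 : V) 1).indicator (fun u => ENNReal.ofReal ‖u‖⁻¹) (w - d) +
        ENNReal.ofReal (Real.exp (-‖w‖ ^ 2)) := by
    intro w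
    have he : Real.exp (-‖w‖ ^ 2) ≤ 1 := Real.exp_le_one_iff.2 (by nlinarith [norm_nonneg w])
    by_cases hw : w - d ∈ ball (0 : V) 1
    · rw [Set.indicator_of_mem hw]
      refine le_add_right (ENNReal.ofReal_le_ofReal ?_)
      exact mul_le_of_le_one_right (by positivity) he
    · rw [Set.indicator_of_notMem hw, zero_add]
      refine ENNReal.ofReal_le_ofReal (mul_le_of_le_one_left (by positivity) ?_)
      exact inv_le_one_of_one_le₀ (by simpa using hw)
  calc _ ≤ ∫⁻ w, ((ball (0 : V) 1).indicator (fun u => ENNReal.ofReal ‖u‖⁻¹) (w - d) +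
        ENNReal.ofReal (Real.exp (-‖w‖ ^ 2))) := lintegral_mono hpt
    _ = _ := by
      rw [lintegral_add_right _ (by fun_prop), lintegral_sub_right_eq_self
        (fun u => (ball (0 : V) 1).indicator (fun u => ENNReal.ofReal ‖u‖⁻¹) u),
        lintegral_indicator measurableSet_ball]

theorem lintegral_ofReal_sum_norm_mul_exp_lt_top (m : ℕ) :
    ∫⁻ y : Fin m → V, ENNReal.ofReal ((∑ k, ‖y k‖) * Real.exp (-∑ k, ‖y k‖ ^ 2)) < ⊤ := by
  have hint : Integrable fun y : Fin m → V => m * ∏ k, Real.exp (-2⁻¹ * ‖y k‖ ^ 2) :=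
    (Integrable.fintype_prod fun _ => integrable_exp_neg_mul_sq_norm (by norm_num)).const_mul _
  refine lt_of_le_of_lt (lintegral_mono fun y => ENNReal.ofReal_le_ofReal ?_)
    hint.lintegral_lt_top
  set S := ∑ k, ‖y k‖ ^ 2
  -- `t ≤ exp (t ^ 2 / 2)` lets each factor `‖y k‖` eat half of the Gaussian weight.
  have hk : ∀ k, ‖y k‖ * Real.exp (-S) ≤ Real.exp (-(S / 2)) := by
    intro k
    have hS : ‖y k‖ ^ 2 ≤ S :=
      Finset.single_le_sum (f := fun k => ‖y k‖ ^ 2) (fun _ _ => by positivity)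
        (Finset.mem_univ k)
    calc ‖y k‖ * Real.exp (-S) ≤ Real.exp (‖y k‖ ^ 2 / 2) * Real.exp (-S) := by
          gcongr
          nlinarith [Real.add_one_le_exp (‖y k‖ ^ 2 / 2), sq_nonneg (‖y k‖ - 1)]
      _ ≤ Real.exp (-(S / 2)) := by rw [← Real.exp_add]; gcongr; linarith
  calc (∑ k, ‖y k‖) * Real.exp (-S) = ∑ k, ‖y k‖ * Real.exp (-S) := Finset.sum_mul _ _ _
    _ ≤ ∑ _k : Fin m, Real.exp (-(S / 2)) := Finset.sum_le_sum fun k _ => hk k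
    _ = m * ∏ k, Real.exp (-2⁻¹ * ‖y k‖ ^ 2) := by
      rw [← Real.exp_sum, Finset.sum_const, Finset.card_univ, Fintype.card_fin, nsmul_eq_mul]
      congr 2
      rw [← Finset.mul_sum]; ring

end InnerProductSpace

instance (n : ℕ) : SFinite (gaussianC n) := by
  unfold gaussianC; infer_instance

theorem exists_lintegral_gaussianC_ratio_le (n : ℕ) :
    ∃ C : ℝ≥0∞, C ≠ ⊤ ∧ ∀ (v : ℂ) (a b : Fin (n + 1) → ℂ), a 0 = 1 → b 0 = 0 →
      ∫⁻ η, ENNReal.ofReal ‖(∑ j, η j * b j) / (∑ j, η j * a j - v)‖ ∂gaussianC n ≤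
        C * ‖b‖ₑ := by
  set K := (∫⁻ u in ball (0 : ℂ) 1, ENNReal.ofReal ‖u‖⁻¹) +
    ∫⁻ w : ℂ, ENNReal.ofReal (Real.exp (-‖w‖ ^ 2))
  set T := ∫⁻ y : Fin n → ℂ, ENNReal.ofReal ((∑ k, ‖y k‖) * Real.exp (-∑ k, ‖y k‖ ^ 2))
  have hK : K ≠ ⊤ := ENNReal.add_ne_top.2
    ⟨(lintegral_ball_ofReal_inv_norm_lt_top (by simp) 1).ne,
      by simpa using (integrable_exp_neg_mul_sq_norm (V := ℂ) one_pos).lintegral_lt_top.ne⟩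
  refine ⟨ENNReal.ofReal (Real.pi ^ (n + 1))⁻¹ * T * K, ?_, fun v a b ha hb => ?_⟩
  · exact ENNReal.mul_ne_top (ENNReal.mul_ne_top ENNReal.ofReal_ne_top
      (lintegral_ofReal_sum_norm_mul_exp_lt_top n).ne) hK
  rw [gaussianC, lintegral_withDensity_eq_lintegral_mul _ (by fun_prop) (by fun_prop),
    lintegral_fin_cons (by fun_prop)]
  set c := (Real.pi ^ (n + 1))⁻¹
  -- As `a 0 = 1` and `b 0 = 0`, splitting off `w = η 0` leaves a numerator free of `w` and a
  -- denominator that is a translate of `w`.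
  have hsplit : ∀ (y : Fin n → ℂ) (w : ℂ),
      ENNReal.ofReal (c * Real.exp (-∑ j, ‖(Fin.cons w y : Fin (n + 1) → ℂ) j‖ ^ 2)) *
        ENNReal.ofReal ‖(∑ j, (Fin.cons w y : Fin (n + 1) → ℂ) j * b j) /
          (∑ j, (Fin.cons w y : Fin (n + 1) → ℂ) j * a j - v)‖ =
      ENNReal.ofReal (c * Real.exp (-∑ k, ‖y k‖ ^ 2) * ‖∑ k, y k * b k.succ‖) *
        ENNReal.ofReal (‖w - (v - ∑ k, y k * a k.succ)‖⁻¹ * Real.exp (-‖w‖ ^ 2)) := by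
    intro y w
    simp only [Fin.sum_univ_succ, Fin.cons_zero, Fin.cons_succ, ha, hb, mul_one, mul_zero,
      zero_add]
    rw [← ENNReal.ofReal_mul (by positivity), ← ENNReal.ofReal_mul (by positivity),
      norm_div, neg_add, Real.exp_add, sub_sub_eq_add_sub, add_comm w]
    ring_nf
  have hnum : ∀ y : Fin n → ℂ, ‖∑ k, y k * b k.succ‖ ≤ ‖b‖ * ∑ k, ‖y k‖ := fun y =>
    calc ‖∑ k, y k * b k.succ‖ ≤ ∑ k, ‖y k‖ * ‖b‖ :=
          (norm_sum_le _ _).trans (Finset.sum_le_sum fun k _ => by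
            rw [norm_mul]; gcongr; exact norm_le_pi_norm b _)
      _ = ‖b‖ * ∑ k, ‖y k‖ := by rw [← Finset.sum_mul, mul_comm]
  simp only [Pi.mul_apply, hsplit]
  calc ∫⁻ y : Fin n → ℂ, ∫⁻ w : ℂ, _ ≤
        ∫⁻ y : Fin n → ℂ, ENNReal.ofReal (c * ‖b‖) *
          ENNReal.ofReal ((∑ k, ‖y k‖) * Real.exp (-∑ k, ‖y k‖ ^ 2)) * K := by
        refine lintegral_mono fun y => ?_
        rw [lintegral_const_mul _ (by fun_prop)]
        refine mul_le_mul' ?_ (lintegral_ofReal_inv_norm_sub_mul_exp_le _)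
        rw [← ENNReal.ofReal_mul (by positivity)]
        refine ENNReal.ofReal_le_ofReal ?_
        calc c * Real.exp (-∑ k, ‖y k‖ ^ 2) * ‖∑ k, y k * b k.succ‖
            ≤ c * Real.exp (-∑ k, ‖y k‖ ^ 2) * (‖b‖ * ∑ k, ‖y k‖) := by gcongr; exact hnum y
          _ = _ := by ring
    _ = ENNReal.ofReal c * T * K * ‖b‖ₑ := by
        rw [lintegral_mul_const _ (by fun_prop), lintegral_const_mul _ (by fun_prop),
          ENNReal.ofReal_mul (by positivity), ofReal_norm]
        ring

section Phi

variable {n : ℕ} {φ : ℕ → Polynomial ℂ}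

theorem eval_Phi (η : Fin (n + 1) → ℂ) (z : ℂ) :
    (Phi n φ η).eval z = ∑ j, η j * (φ j).eval z := by
  simp [Phi, eval_finsetSum]

theorem eval_derivative_Phi (η : Fin (n + 1) → ℂ) (z : ℂ) :
    (derivative (Phi n φ η)).eval z = ∑ j, η j * (derivative (φ j)).eval z := by
  simp [Phi, eval_finsetSum]

end Phi

theorem ratio_integrable_on_circle_general (n : ℕ) (φ : ℕ → Polynomial ℂ) (hφ0 : φ 0 = 1)
    (v : ℂ) (ϱ : ℝ) :
    (∫⁻ η, (∫⁻ θ in Set.Ioc 0 (2 * Real.pi),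
        ENNReal.ofReal
          (‖(Polynomial.derivative (Phi n φ η)).eval ((ϱ : ℂ) * Complex.exp ((θ : ℂ) * Complex.I)) /
              ((Phi n φ η).eval ((ϱ : ℂ) * Complex.exp ((θ : ℂ) * Complex.I)) - v)‖ * ϱ))
      ∂gaussianC n) < ⊤ ∧
    Integrable
      (fun p : (Fin (n + 1) → ℂ) × ℝ =>
        (Polynomial.derivative (Phi n φ p.1)).eval ((ϱ : ℂ) * Complex.exp ((p.2 : ℂ) * Complex.I)) /
          ((Phi n φ p.1).eval ((ϱ : ℂ) * Complex.exp ((p.2 : ℂ) * Complex.I)) - v))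
      ((gaussianC n).prod
        (ENNReal.ofReal ϱ • volume.restrict (Set.Ioc 0 (2 * Real.pi)))) := by
  simp only [← circleMap_zero]
  set ν := ENNReal.ofReal ϱ • volume.restrict (Set.Ioc 0 (2 * Real.pi))
  set F : (Fin (n + 1) → ℂ) × ℝ → ℂ := fun p => (derivative (Phi n φ p.1)).eval
    (circleMap 0 ϱ p.2) / ((Phi n φ p.1).eval (circleMap 0 ϱ p.2) - v)
  have hF : Measurable F := by
    simp only [F, eval_Phi, eval_derivative_Phi]
    fun_prop
  obtain ⟨C, hC, hratio⟩ := exists_lintegral_gaussianC_ratio_le n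
  obtain ⟨B, hB⟩ := (isCompact_sphere (0 : ℂ) |ϱ|).exists_bound_of_continuousOn
    (f := fun z j => (derivative (φ (j : Fin (n + 1)))).eval z) (by fun_prop)
  have hslice (θ : ℝ) : ∫⁻ η, ‖F (η, θ)‖ₑ ∂gaussianC n ≤ C * ENNReal.ofReal B := by
    simp only [F, eval_Phi, eval_derivative_Phi, ← ofReal_norm]
    refine (hratio v _ _ (by simp [hφ0]) (by simp [hφ0])).trans ?_
    rw [← ofReal_norm]
    gcongr
    exact hB _ (circleMap_mem_sphere' 0 ϱ θ)
  have hfin : ∫⁻ p, ‖F p‖ₑ ∂(gaussianC n).prod ν < ⊤ := by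
    rw [lintegral_prod_symm _ hF.enorm.aemeasurable]
    calc _ ≤ ∫⁻ _, C * ENNReal.ofReal B ∂ν := lintegral_mono hslice
      _ < ⊤ := by
        simp only [ν, lintegral_const, Measure.smul_apply, Measure.restrict_apply_univ,
          smul_eq_mul]
        exact ENNReal.mul_lt_top (ENNReal.mul_lt_top hC.lt_top ENNReal.ofReal_lt_top)
          (ENNReal.mul_lt_top ENNReal.ofReal_lt_top measure_Ioc_lt_top)
  refine ⟨?_, hF.aestronglyMeasurable, hfin⟩
  rwa [lintegral_prod_smul_restrict_enorm hF.aestronglyMeasurable] at hfin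

/-- The double integral `∫_γ ∫_0^{2π} |Φ_η'(ϱe^{iθ})/(Φ_η(ϱe^{iθ}) − v)| ϱ dθ dγ(η)` is finite;
in particular the integrand is integrable with respect to the product of `γ` with the
arclength measure `ϱ dθ` on the circle of radius `ϱ`. -/
theorem ratio_integrable_on_circle (n : ℕ) (hn : 1 ≤ n) (φ : ℕ → Polynomial ℂ)
    (hφ0 : φ 0 = 1) (hdeg : ∀ j ≤ n, (φ j).natDegree = j)
    (v : ℂ) (ϱ : ℝ) (hϱ : 0 < ϱ) :
    (∫⁻ η, (∫⁻ θ in Set.Ioc 0 (2 * Real.pi),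
        ENNReal.ofReal
          (‖(Polynomial.derivative (Phi n φ η)).eval ((ϱ : ℂ) * Complex.exp ((θ : ℂ) * Complex.I)) /
              ((Phi n φ η).eval ((ϱ : ℂ) * Complex.exp ((θ : ℂ) * Complex.I)) - v)‖ * ϱ))
      ∂gaussianC n) < ⊤ ∧
    Integrable
      (fun p : (Fin (n + 1) → ℂ) × ℝ =>
        (Polynomial.derivative (Phi n φ p.1)).eval ((ϱ : ℂ) * Complex.exp ((p.2 : ℂ) * Complex.I)) /
          ((Phi n φ p.1).eval ((ϱ : ℂ) * Complex.exp ((p.2 : ℂ) * Complex.I)) - v))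
      ((gaussianC n).prod
        (ENNReal.ofReal ϱ • volume.restrict (Set.Ioc 0 (2 * Real.pi)))) :=
  ratio_integrable_on_circle_general n φ hφ0 v ϱ
end

section
/- If the sequence (φ_j) belongs to the Nevai class, then (1 − |z|²)·K_n(z,z)/|φ_{n+1}*(z)|² → 1 as n → ∞, uniformly on compact subsets of the open unit disk 𝔻. -/
open MeasureTheory Polynomial Filter Metric
open ComplexConjugate

/-- The reversed polynomial `φ*ⱼ(z) = z^j conj(φⱼ(1/conj z))`: conjugate the coefficients and
reverse their order. -/
noncomputable def revPoly (p : Polynomial ℂ) : Polynomial ℂ :=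
  (p.map (starRingEnd ℂ)).reverse

/-!
Szegő's recursion `φₙ₊₁ = a z φₙ + b φₙ*`, `φₙ₊₁* = ā φₙ* + b̄ z φₙ` with `|a|² - |b|² = 1` gives
`|φₙ₊₁*|² - |φₙ₊₁|² = |φₙ*|² - |z|² |φₙ|²`, which telescopes to the Christoffel–Darboux identity
`|φₙ₊₁*(z)|² = |φₙ₊₁(z)|² + (1 - |z|²) Kₙ(z,z)`. So the quotient in question equals
`1 - |φₙ₊₁(z) / φₙ₊₁*(z)|²`, which tends to `1` by the Nevai condition.
-/

open Finset

/-- The reversed polynomial of formal degree `N`: `z ^ N * conj (p (1 / conj z))` when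
`p.natDegree ≤ N`. -/
noncomputable def conjReflect (N : ℕ) (p : ℂ[X]) : ℂ[X] :=
  reflect N (p.map (starRingEnd ℂ))

section conjReflect

variable {N : ℕ} {p : ℂ[X]}

theorem revPoly_eq_conjReflect (p : ℂ[X]) : revPoly p = conjReflect p.natDegree p := by
  rw [revPoly, reverse, natDegree_map, conjReflect]

theorem conjReflect_add (N : ℕ) (p q : ℂ[X]) :
    conjReflect N (p + q) = conjReflect N p + conjReflect N q := by
  simp [conjReflect]

theorem conjReflect_smul (N : ℕ) (c : ℂ) (p : ℂ[X]) :
    conjReflect N (c • p) = conj c • conjReflect N p := by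
  simp [conjReflect, smul_eq_C_mul]

theorem conjReflect_conjReflect (N : ℕ) (p : ℂ[X]) : conjReflect N (conjReflect N p) = p := by
  ext k
  simp [conjReflect, coeff_reflect, revAt_invol]

theorem natDegree_conjReflect_le (hp : p.natDegree ≤ N) : (conjReflect N p).natDegree ≤ N :=
  natDegree_reflect_le.trans (max_le le_rfl (natDegree_map_le.trans hp))

theorem conjReflect_succ_X_mul (hp : p.natDegree ≤ N) :
    conjReflect (N + 1) (X * p) = conjReflect N p := by
  rw [conjReflect, Polynomial.map_mul, map_X, add_comm, reflect_mul _ _ natDegree_X_le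
    (natDegree_map_le.trans hp), reflect_one_X, one_mul, conjReflect]

theorem conjReflect_succ (hp : p.natDegree ≤ N) :
    conjReflect (N + 1) p = X * conjReflect N p := by
  rw [conjReflect, ← mul_one (p.map _), reflect_mul _ _ (G := 1) (natDegree_map_le.trans hp)
    (natDegree_one.trans_le zero_le_one), reflect_one, pow_one, mul_comm, conjReflect]

theorem eval_conjReflect_of_norm_eq_one (hp : p.natDegree ≤ N) {z : ℂ} (hz : ‖z‖ = 1) :
    (conjReflect N p).eval z = z ^ N * conj (p.eval z) := by
  have hz0 : z⁻¹ ≠ 0 := inv_ne_zero (norm_ne_zero_iff.mp (hz ▸ one_ne_zero))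
  let := invertibleOfNonzero hz0
  have h := eval₂_reflect_mul_pow (RingHom.id ℂ) z⁻¹ N (p.map (starRingEnd ℂ))
    (natDegree_map_le.trans hp)
  simp only [invOf_eq_inv, inv_inv, eval₂_id] at h
  rw [Complex.inv_eq_conj hz, eval_map_apply] at h
  rw [conjReflect, ← h, mul_comm, mul_assoc, ← mul_pow, mul_comm (conj z), Complex.mul_conj', hz]
  simp

end conjReflect

theorem revPoly_smul_X_mul_add_smul_revPoly {a : ℂ} (ha : a ≠ 0) (b : ℂ) (p : ℂ[X]) :
    revPoly (a • (X * p) + b • revPoly p) = conj a • revPoly p + conj b • (X * p) := by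
  rcases eq_or_ne p 0 with rfl | hp
  · simp [revPoly]
  have hdeg : (a • (X * p) + b • revPoly p).natDegree = p.natDegree + 1 := by
    rw [natDegree_add_eq_left_of_natDegree_lt] <;> rw [natDegree_smul _ ha, natDegree_X_mul hp]
    rw [revPoly_eq_conjReflect]
    exact (natDegree_smul_le _ _).trans_lt (Nat.lt_succ_of_le (natDegree_conjReflect_le le_rfl))
  rw [revPoly_eq_conjReflect, hdeg, conjReflect_add, conjReflect_smul, conjReflect_smul,
    conjReflect_succ_X_mul le_rfl, revPoly_eq_conjReflect,
    conjReflect_succ (natDegree_conjReflect_le le_rfl), conjReflect_conjReflect]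

theorem norm_eval_revPoly_of_natDegree_eq_zero {p : ℂ[X]} (hp : p.natDegree = 0) (z : ℂ) :
    ‖(revPoly p).eval z‖ = ‖p.eval z‖ := by
  rw [eq_C_of_natDegree_eq_zero hp]
  simp [revPoly]

theorem mul_conj_of_norm_eq_one {z : ℂ} (hz : ‖z‖ = 1) : z * conj z = 1 := by
  rw [Complex.mul_conj', hz, Complex.ofReal_one, one_pow]

section circleInner

variable {μ : Measure ℂ} [IsFiniteMeasure μ] (hμ : ∀ᵐ z ∂μ, ‖z‖ = 1)

include hμ in
theorem integrable_eval_mul_conj_eval (p q : ℂ[X]) :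
    Integrable (fun z => p.eval z * conj (q.eval z)) μ := by
  have hcont : Continuous fun z => p.eval z * conj (q.eval z) := by fun_prop
  obtain ⟨C, hC⟩ := (isCompact_sphere (0 : ℂ) 1).exists_bound_of_continuousOn hcont.continuousOn
  refine Integrable.mono' (integrable_const C) hcont.aestronglyMeasurable ?_
  filter_upwards [hμ] with z hz
  exact hC z (mem_sphere_zero_iff_norm.mpr hz)

noncomputable def circleInner : ℂ[X] →ₗ[ℂ] ℂ[X] →ₗ⋆[ℂ] ℂ :=
  LinearMap.mk₂'ₛₗ (RingHom.id ℂ) (starRingEnd ℂ)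
    (fun p q => ∫ z, p.eval z * conj (q.eval z) ∂μ)
    (fun p₁ p₂ q => by
      simp only [eval_add, add_mul]
      exact integral_add (integrable_eval_mul_conj_eval hμ _ _)
        (integrable_eval_mul_conj_eval hμ _ _))
    (fun c p q => by simp only [eval_smul, smul_eq_mul, mul_assoc, integral_const_mul]; rfl)
    (fun p q₁ q₂ => by
      simp only [eval_add, map_add, mul_add]
      exact integral_add (integrable_eval_mul_conj_eval hμ _ _)
        (integrable_eval_mul_conj_eval hμ _ _))
    (fun c p q => by
      simp only [eval_smul, smul_eq_mul, map_mul, mul_left_comm _ (conj c), integral_const_mul])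

theorem circleInner_apply (p q : ℂ[X]) :
    circleInner hμ p q = ∫ z, p.eval z * conj (q.eval z) ∂μ := rfl

theorem circleInner_conj (p q : ℂ[X]) : conj (circleInner hμ p q) = circleInner hμ q p := by
  simp only [circleInner_apply, ← integral_conj, map_mul, Complex.conj_conj, mul_comm]

theorem circleInner_X_mul_X_mul (p q : ℂ[X]) :
    circleInner hμ (X * p) (X * q) = circleInner hμ p q := by
  refine integral_congr_ae ?_
  filter_upwards [hμ] with z hz
  simp only [eval_mul, eval_X, map_mul]
  linear_combination (p.eval z * conj (q.eval z)) * mul_conj_of_norm_eq_one hz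

theorem circleInner_conjReflect_conjReflect {N : ℕ} {p q : ℂ[X]} (hp : p.natDegree ≤ N)
    (hq : q.natDegree ≤ N) :
    circleInner hμ (conjReflect N p) (conjReflect N q) = circleInner hμ q p := by
  refine integral_congr_ae ?_
  filter_upwards [hμ] with z hz
  rw [eval_conjReflect_of_norm_eq_one hp hz, eval_conjReflect_of_norm_eq_one hq hz, map_mul,
    map_pow, Complex.conj_conj]
  linear_combination
    (q.eval z * conj (p.eval z)) * pow_mul_pow_eq_one N (mul_conj_of_norm_eq_one hz)

end circleInner

theorem norm_sq_conj_mul_add_sub_norm_sq_mul_add (a b w v : ℂ) :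
    ‖conj a * v + conj b * w‖ ^ 2 - ‖a * w + b * v‖ ^ 2
      = (‖a‖ ^ 2 - ‖b‖ ^ 2) * (‖v‖ ^ 2 - ‖w‖ ^ 2) := by
  simp only [Complex.sq_norm, Complex.normSq_apply, Complex.add_re, Complex.add_im,
    Complex.mul_re, Complex.mul_im, Complex.conj_re, Complex.conj_im]
  ring

theorem Kd_zero (φ : ℕ → ℂ[X]) (z : ℂ) : Kd φ 0 z = ‖(φ 0).eval z‖ ^ 2 := by
  simp [Kd]

theorem Kd_succ (φ : ℕ → ℂ[X]) (n : ℕ) (z : ℂ) :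
    Kd φ (n + 1) z = Kd φ n z + ‖(φ (n + 1)).eval z‖ ^ 2 := by
  simp [Kd, Fin.sum_univ_castSucc]

theorem Kd_pos {φ : ℕ → ℂ[X]} (h₀ : (φ 0).natDegree = 0) (hne : φ 0 ≠ 0) (n : ℕ) (z : ℂ) :
    0 < Kd φ n z := by
  have hφ₀ : 0 < ‖(φ 0).eval z‖ ^ 2 := by
    have hc : (φ 0).coeff 0 ≠ 0 := fun h => hne (by rw [eq_C_of_natDegree_eq_zero h₀, h, C_0])
    rw [eq_C_of_natDegree_eq_zero h₀, eval_C]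
    positivity
  exact hφ₀.trans_le (Finset.single_le_sum (f := fun j : Fin (n + 1) => ‖(φ j).eval z‖ ^ 2)
    (fun _ _ => sq_nonneg _) (mem_univ 0))

section Orthonormal

variable {μ : Measure ℂ} [IsFiniteMeasure μ] (hμ : ∀ᵐ z ∂μ, ‖z‖ = 1) {φ : ℕ → ℂ[X]}
  (hdeg : ∀ j, (φ j).natDegree = j)
  (horth : ∀ j k, circleInner hμ (φ j) (φ k) = if j = k then 1 else 0)

include horth in
theorem ne_zero_of_circleInner_orthonormal (j : ℕ) : φ j ≠ 0 := by
  intro h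
  simpa [h] using horth j j

include hdeg horth in
theorem eq_sum_circleInner_smul {q : ℂ[X]} {n : ℕ} (hq : q.natDegree ≤ n) :
    q = ∑ j ∈ range (n + 1), circleInner hμ q (φ j) • φ j := by
  let S : Polynomial.Sequence ℂ :=
    ⟨φ, fun j => by rw [degree_eq_natDegree (ne_zero_of_circleInner_orthonormal hμ horth j), hdeg]⟩
  have hmem : q ∈ Submodule.span ℂ (φ '' ↑(range (n + 1))) := by
    rw [coe_range]
    refine (S.span_degreeLT fun j _ => ?_).ge (mem_degreeLT.mpr ?_)
    · exact (leadingCoeff_ne_zero.mpr (ne_zero_of_circleInner_orthonormal hμ horth j)).isUnit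
    · exact (degree_le_of_natDegree_le hq).trans_lt (WithBot.coe_lt_coe.mpr n.lt_succ_self)
  obtain ⟨c, rfl⟩ := (Submodule.mem_span_image_finset_iff_exists_fun' ℂ).mp hmem
  refine Finset.sum_congr rfl fun k hk => ?_
  simp [map_sum, horth, hk]

include hdeg horth in
theorem circleInner_eq_zero_of_natDegree_lt {m : ℕ} {q : ℂ[X]} (hq : q.natDegree < m) :
    circleInner hμ (φ m) q = 0 := by
  rw [eq_sum_circleInner_smul hμ hdeg horth (Nat.le_sub_one_of_lt hq), map_sum]
  refine Finset.sum_eq_zero fun j hj => ?_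
  rw [map_smulₛₗ, horth, if_neg (by rw [mem_range] at hj; omega), smul_zero]

include hdeg horth in
theorem eq_circleInner_smul_of_forall_lt {n : ℕ} {u : ℂ[X]} (hu : u.natDegree ≤ n)
    (h : ∀ j < n, circleInner hμ u (φ j) = 0) : u = circleInner hμ u (φ n) • φ n :=
  calc u = ∑ j ∈ range (n + 1), circleInner hμ u (φ j) • φ j :=
        eq_sum_circleInner_smul hμ hdeg horth hu
    _ = circleInner hμ u (φ n) • φ n := by
        rw [Finset.sum_range_succ, Finset.sum_eq_zero fun j hj => by
          rw [h j (mem_range.mp hj), zero_smul], zero_add]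

include hdeg horth in
theorem exists_eq_smul_X_mul_add_smul_revPoly (n : ℕ) :
    ∃ a b : ℂ, φ (n + 1) = a • (X * φ n) + b • revPoly (φ n) := by
  set a := (φ (n + 1)).leadingCoeff / (φ n).leadingCoeff
  set r := φ (n + 1) - a • (X * φ n)
  have hr : r.natDegree ≤ n := by
    refine natDegree_le_iff_coeff_eq_zero.mpr fun k hk => ?_
    obtain ⟨k, rfl⟩ := Nat.exists_eq_add_of_lt hk
    simp only [r, coeff_sub, coeff_smul, coeff_X_mul, smul_eq_mul]
    rcases k with _ | k
    · have hκ := leadingCoeff_ne_zero.mpr (ne_zero_of_circleInner_orthonormal hμ horth n)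
      rw [leadingCoeff, hdeg] at hκ
      simp only [a, leadingCoeff, hdeg, add_zero, div_mul_cancel₀ _ hκ, sub_self]
    · rw [coeff_eq_zero_of_natDegree_lt, coeff_eq_zero_of_natDegree_lt, mul_zero, sub_zero] <;>
        rw [hdeg] <;> omega
  -- `r` has degree `≤ n` and is orthogonal to `z φⱼ` for `j < n`; reflecting, `conjReflect n r` is
  -- orthogonal to `φⱼ` for `j < n`, hence a multiple of `φₙ`.
  have hu : ∀ j < n, circleInner hμ (conjReflect n r) (φ j) = 0 := by
    intro j hj
    obtain ⟨m, rfl⟩ : ∃ m, n = m + 1 := ⟨n - 1, by omega⟩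
    have hjm : (φ j).natDegree ≤ m := by rw [hdeg]; omega
    have hw := natDegree_conjReflect_le hjm
    calc circleInner hμ (conjReflect (m + 1) r) (φ j)
        = circleInner hμ (X * conjReflect m (φ j)) r := by
          rw [← conjReflect_succ hjm, ← circleInner_conjReflect_conjReflect hμ hr
            (natDegree_conjReflect_le (hjm.trans m.le_succ)), conjReflect_conjReflect]
      _ = 0 := by
          have hXw : (X * conjReflect m (φ j)).natDegree < m + 2 :=
            natDegree_mul_le.trans_lt (by rw [natDegree_X]; omega)
          rw [map_sub, map_smulₛₗ, circleInner_X_mul_X_mul, ← circleInner_conj hμ (φ _),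
            ← circleInner_conj hμ (φ _), circleInner_eq_zero_of_natDegree_lt hμ hdeg horth hXw,
            circleInner_eq_zero_of_natDegree_lt hμ hdeg horth (by omega)]
          simp
  refine ⟨a, conj (circleInner hμ (conjReflect n r) (φ n)), ?_⟩
  rw [revPoly_eq_conjReflect, hdeg, ← conjReflect_smul,
    ← eq_circleInner_smul_of_forall_lt hμ hdeg horth (natDegree_conjReflect_le hr) hu,
    conjReflect_conjReflect, add_sub_cancel]

include hdeg horth in
theorem norm_sq_sub_norm_sq_eq_one {n : ℕ} {a b : ℂ}
    (h : φ (n + 1) = a • (X * φ n) + b • revPoly (φ n)) : ‖a‖ ^ 2 - ‖b‖ ^ 2 = 1 := by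
  have hXX : circleInner hμ (X * φ n) (X * φ n) = 1 := by
    rw [circleInner_X_mul_X_mul, horth, if_pos rfl]
  have hrev : circleInner hμ (revPoly (φ n)) (revPoly (φ n)) = 1 := by
    rw [revPoly_eq_conjReflect, circleInner_conjReflect_conjReflect hμ le_rfl le_rfl, horth,
      if_pos rfl]
  have hperp : circleInner hμ (φ (n + 1)) (revPoly (φ n)) = 0 :=
    circleInner_eq_zero_of_natDegree_lt hμ hdeg horth <| by
      rw [revPoly_eq_conjReflect]
      exact (natDegree_conjReflect_le le_rfl).trans_lt (by rw [hdeg]; omega)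
  have hone : circleInner hμ (φ (n + 1)) (φ (n + 1)) = 1 := by rw [horth, if_pos rfl]
  rw [h] at hperp hone
  simp only [map_add, map_smul, map_smulₛₗ, LinearMap.add_apply, LinearMap.smul_apply, smul_eq_mul,
    hXX, hrev, ← circleInner_conj hμ (X * φ n) (revPoly (φ n))] at hperp hone
  have hperp' := congrArg conj hperp
  simp only [map_add, map_mul, map_one, map_zero] at hperp'
  have hC : ((‖a‖ ^ 2 - ‖b‖ ^ 2 : ℝ) : ℂ) = 1 := by
    push_cast
    rw [← Complex.mul_conj', ← Complex.mul_conj']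
    linear_combination hone - conj b * hperp - b * hperp'
  exact_mod_cast hC

include hdeg horth in
theorem norm_sq_eval_revPoly_succ_sub (n : ℕ) (z : ℂ) :
    ‖(revPoly (φ (n + 1))).eval z‖ ^ 2 - ‖(φ (n + 1)).eval z‖ ^ 2
      = ‖(revPoly (φ n)).eval z‖ ^ 2 - ‖z‖ ^ 2 * ‖(φ n).eval z‖ ^ 2 := by
  obtain ⟨a, b, h⟩ := exists_eq_smul_X_mul_add_smul_revPoly hμ hdeg horth n
  have hab := norm_sq_sub_norm_sq_eq_one hμ hdeg horth h
  have ha : a ≠ 0 := norm_pos_iff.mp (by nlinarith [norm_nonneg a, sq_nonneg ‖b‖])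
  rw [h, revPoly_smul_X_mul_add_smul_revPoly ha]
  simp only [eval_add, eval_smul, eval_mul, eval_X, smul_eq_mul]
  rw [norm_sq_conj_mul_add_sub_norm_sq_mul_add, hab, one_mul, norm_mul, mul_pow]

include hdeg horth in
theorem norm_sq_eval_revPoly_succ (n : ℕ) (z : ℂ) :
    ‖(revPoly (φ (n + 1))).eval z‖ ^ 2
      = ‖(φ (n + 1)).eval z‖ ^ 2 + (1 - ‖z‖ ^ 2) * Kd φ n z := by
  have hstep := norm_sq_eval_revPoly_succ_sub hμ hdeg horth n z
  induction n with
  | zero =>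
    rw [norm_eval_revPoly_of_natDegree_eq_zero (hdeg 0)] at hstep
    rw [Kd_zero]
    linarith
  | succ n ih =>
    rw [ih (norm_sq_eval_revPoly_succ_sub hμ hdeg horth n z)] at hstep
    rw [Kd_succ]
    linarith

include hdeg horth in
theorem one_sub_norm_sq_mul_Kd_div {z : ℂ} (hz : ‖z‖ < 1) (n : ℕ) :
    (1 - ‖z‖ ^ 2) * Kd φ n z / ‖(revPoly (φ (n + 1))).eval z‖ ^ 2
      = 1 - ‖(φ (n + 1)).eval z / (revPoly (φ (n + 1))).eval z‖ ^ 2 := by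
  have hCD := norm_sq_eval_revPoly_succ hμ hdeg horth n z
  have hK := Kd_pos (hdeg 0) (ne_zero_of_circleInner_orthonormal hμ horth 0) n z
  have hpos : 0 < ‖(revPoly (φ (n + 1))).eval z‖ ^ 2 := by
    rw [hCD]
    have : 0 < 1 - ‖z‖ ^ 2 := by nlinarith [norm_nonneg z]
    positivity
  rw [norm_div, div_pow, eq_sub_iff_add_eq, ← add_div, div_eq_one_iff_eq hpos.ne', hCD]
  ring

end Orthonormal

theorem TendstoLocallyUniformlyOn.comp_tendsto {ι ι' α β : Type*} [TopologicalSpace α]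
    [UniformSpace β] {F : ι → α → β} {f : α → β} {p : Filter ι} {s : Set α}
    (h : TendstoLocallyUniformlyOn F f p s) {g : ι' → ι} {p' : Filter ι'} (hg : Tendsto g p' p) :
    TendstoLocallyUniformlyOn (fun n => F (g n)) f p' s := fun u hu x hx =>
  let ⟨t, ht, hF⟩ := h u hu x hx
  ⟨t, ht, hg.eventually hF⟩

theorem TendstoLocallyUniformlyOn.one_sub_norm_sq {ι α E : Type*} [TopologicalSpace α]
    [SeminormedAddCommGroup E] {F : ι → α → E} {p : Filter ι} {s : Set α}
    (h : TendstoLocallyUniformlyOn F (fun _ => 0) p s) :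
    TendstoLocallyUniformlyOn (fun n z => 1 - ‖F n z‖ ^ 2) (fun _ => 1) p s := by
  rw [Metric.tendstoLocallyUniformlyOn_iff] at h ⊢
  intro ε hε x hx
  obtain ⟨t, ht, hF⟩ := h (min ε 1) (lt_min hε one_pos) x hx
  refine ⟨t, ht, hF.mono fun n hn y hy => ?_⟩
  have hsmall := hn y hy
  rw [dist_zero_left, lt_min_iff] at hsmall
  rw [Real.dist_eq, sub_sub_cancel, abs_of_nonneg (sq_nonneg _)]
  nlinarith [norm_nonneg (F n y)]

theorem nevai_kernel_asymptotics_general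
    (μ : Measure ℂ) [IsProbabilityMeasure μ]
    (hcirc : μ {z : ℂ | ‖z‖ ≠ 1} = 0)
    (φ : ℕ → Polynomial ℂ)
    (hdeg : ∀ j, (φ j).natDegree = j)
    (horth : ∀ j k, (∫ z, (φ j).eval z * conj ((φ k).eval z) ∂μ)
      = if j = k then 1 else 0)
    (hNevai : TendstoLocallyUniformlyOn
      (fun j z => (φ j).eval z / (revPoly (φ j)).eval z) (fun _ => 0)
      Filter.atTop (Metric.ball (0 : ℂ) 1)) :
    TendstoLocallyUniformlyOn
      (fun n z => (1 - ‖z‖ ^ 2) * Kd φ n z / ‖(revPoly (φ (n + 1))).eval z‖ ^ 2)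
      (fun _ => 1) Filter.atTop (Metric.ball (0 : ℂ) 1) := by
  have hμ : ∀ᵐ z ∂μ, ‖z‖ = 1 := ae_iff.mpr hcirc
  refine ((hNevai.comp_tendsto (tendsto_add_atTop_nat 1)).one_sub_norm_sq).congr
    fun n z hz => ?_
  exact (one_sub_norm_sq_mul_Kd_div hμ hdeg horth (mem_ball_zero_iff.mp hz) n).symm

/-- If the orthonormal polynomials `(φ_j)` of a probability measure on the unit circle with
infinite support belong to the Nevai class, then
`(1 − |z|²) K_n(z,z)/|φ*_{n+1}(z)|² → 1` locally uniformly on the open unit disk. -/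
theorem nevai_kernel_asymptotics
    (μ : Measure ℂ) [IsProbabilityMeasure μ]
    (hcirc : μ {z : ℂ | ‖z‖ ≠ 1} = 0)
    (hsupp : ∀ s : Finset ℂ, μ ((↑s : Set ℂ)ᶜ) ≠ 0)
    (φ : ℕ → Polynomial ℂ)
    (hdeg : ∀ j, (φ j).natDegree = j)
    (hlead : ∀ j, 0 < ((φ j).leadingCoeff).re ∧ ((φ j).leadingCoeff).im = 0)
    (horth : ∀ j k, (∫ z, (φ j).eval z * conj ((φ k).eval z) ∂μ)
      = if j = k then 1 else 0)
    (hNevai : TendstoLocallyUniformlyOn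
      (fun j z => (φ j).eval z / (revPoly (φ j)).eval z) (fun _ => 0)
      Filter.atTop (Metric.ball (0 : ℂ) 1)) :
    TendstoLocallyUniformlyOn
      (fun n z => (1 - ‖z‖ ^ 2) * Kd φ n z / ‖(revPoly (φ (n + 1))).eval z‖ ^ 2)
      (fun _ => 1) Filter.atTop (Metric.ball (0 : ℂ) 1) :=
  nevai_kernel_asymptotics_general μ hcirc φ hdeg horth hNevai
end

section
/- For every v ∈ ℂ, uniformly on compact subsets of the open unit disk 𝔻, ρ_{n,v}(z) → (1/π)·( 1/(1 − |z|²)² + |v|²·|z|²/(1 − |z|²) )·exp(−|v|²·(1 − |z|²)) as n → ∞. -/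
open MeasureTheory Polynomial Filter Metric
open ComplexConjugate

/-!
With `t = |z|²` the kernels of the monomial basis are partial sums of power series in `t` with
nonnegative coefficients: `K_n = ∑ tʲ`, `K_n^{(0,1)} = z ∑ j tʲ⁻¹` and `K_n^{(1,1)} = ∑ j² tʲ⁻¹`,
with sums `1/(1-t)`, `1/(1-t)²` and `(1+t)/(1-t)³` on `[0, 1)`. Being monotone in `n`, they
converge locally uniformly by Dini's theorem, and `ρ_{n,v}(z)` is one fixed continuous function of
`(t, 1/K_n, ∑ j tʲ⁻¹, K_n^{(1,1)})`, which carries the convergence over to the densities.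
-/

open Finset Set Topology

section Series

variable {𝕜 : Type*} [NormedField 𝕜] {r : 𝕜}

theorem hasSum_coe_mul_pow_sub_one (hr : ‖r‖ < 1) :
    HasSum (fun n : ℕ => (n : 𝕜) * r ^ (n - 1)) (1 / (1 - r) ^ 2) := by
  rw [← hasSum_nat_add_iff' 1]
  simpa [add_comm] using hasSum_choose_mul_geometric_of_norm_lt_one 1 hr

theorem hasSum_coe_sq_mul_pow_sub_one (hr : ‖r‖ < 1) :
    HasSum (fun n : ℕ => (n : 𝕜) ^ 2 * r ^ (n - 1)) ((1 + r) / (1 - r) ^ 3) := by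
  have hr1 : 1 - r ≠ 0 := sub_ne_zero.2 (ne_of_apply_ne norm (by simp [hr.ne']))
  -- `(n + 1) ^ 2 = 2 * (n + 2).choose 2 - (n + 1).choose 1`
  have h := ((hasSum_choose_mul_geometric_of_norm_lt_one 2 hr).mul_left 2).sub
    (hasSum_choose_mul_geometric_of_norm_lt_one 1 hr)
  rw [← hasSum_nat_add_iff' 1, sum_range_one]
  convert h using 1
  · ext n
    have hN : (n + 2).choose 2 * 2 = (n + 2) * (n + 1) := by
      simpa [mul_comm] using (Nat.add_one_mul_choose_eq (n + 1) 1).symm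
    have hc := congrArg (Nat.cast (R := 𝕜)) hN
    push_cast [Nat.choose_one_right] at hc ⊢
    linear_combination (-(r ^ n)) * hc
  · field_simp
    ring

end Series

section LocallyUniform

variable {ι α β γ : Type*} [TopologicalSpace α] {s : Set α}

theorem Continuous.comp_tendstoLocallyUniformlyOn [PseudoMetricSpace β] [ProperSpace β]
    [PseudoMetricSpace γ] {F : ι → α → β} {f : α → β} {p : Filter ι} {g : β → γ}
    (hg : Continuous g) (hF : TendstoLocallyUniformlyOn F f p s) (hf : ContinuousOn f s) :
    TendstoLocallyUniformlyOn (g ∘ F ·) (g ∘ f) p s := by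
  -- for `y` near `x` and large `n`, both `f y` and `F n y` lie in the compact ball
  -- `closedBall (f x) 1`, on which `g` is uniformly continuous
  rw [Metric.tendstoLocallyUniformlyOn_iff] at hF ⊢
  intro ε hε x hx
  obtain ⟨δ, hδ, hgδ⟩ := Metric.uniformContinuousOn_iff.1
    ((isCompact_closedBall (f x) 1).uniformContinuousOn_of_continuous hg.continuousOn) ε hε
  obtain ⟨t, ht, hFt⟩ := hF (min δ (1 / 2)) (by positivity) x hx
  have hfx : ∀ᶠ y in 𝓝[s] x, dist (f y) (f x) < 1 / 2 :=
    Metric.tendsto_nhds.1 (hf x hx) _ (by norm_num)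
  refine ⟨t ∩ {y | dist (f y) (f x) < 1 / 2}, inter_mem ht hfx, ?_⟩
  filter_upwards [hFt] with n hn y ⟨hyt, hyx⟩
  have hyx : dist (f y) (f x) < 1 / 2 := hyx
  have hFn := hn y hyt
  have hfy : f y ∈ closedBall (f x) 1 := mem_closedBall.2 (by linarith)
  have hFy : F n y ∈ closedBall (f x) 1 := mem_closedBall.2 <| by
    linarith [dist_triangle (F n y) (f y) (f x), dist_comm (f y) (F n y), min_le_right δ (1 / 2)]
  exact hgδ _ hfy _ hFy (hFn.trans_le (min_le_left _ _))

theorem tendstoLocallyUniformlyOn_sum_range_succ_of_nonneg {f : ℕ → α → ℝ} {g : α → ℝ}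
    (hf : ∀ j, ContinuousOn (f j) s) (hf₀ : ∀ j, ∀ x ∈ s, 0 ≤ f j x) (hg : ContinuousOn g s)
    (hfg : ∀ x ∈ s, HasSum (f · x) (g x)) :
    TendstoLocallyUniformlyOn (fun n x => ∑ j ∈ range (n + 1), f j x) g atTop s :=
  Monotone.tendstoLocallyUniformlyOn_of_forall_tendsto
    (fun n => continuousOn_finsetSum _ fun j _ => hf j)
    (fun x hx _ _ hmn => sum_le_sum_of_subset_of_nonneg (range_subset_range.2 (by omega))
      fun j _ _ => hf₀ j x hx)
    hg (fun x hx => (hfg x hx).tendsto_sum_nat.comp (tendsto_add_atTop_nat 1))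

end LocallyUniform

theorem continuousOn_div_one_sub_pow {c : ℝ → ℝ} (hc : Continuous c) (k : ℕ) :
    ContinuousOn (fun t => c t / (1 - t) ^ k) (Iio 1) :=
  hc.continuousOn.div (by fun_prop) fun t ht => pow_ne_zero _ (sub_ne_zero.2 (ne_of_gt ht))

theorem tendstoLocallyUniformlyOn_monomialKernelSums :
    TendstoLocallyUniformlyOn
      (fun n (t : ℝ) => (t, (∑ j ∈ range (n + 1), t ^ j)⁻¹,
        ∑ j ∈ range (n + 1), (j : ℝ) * t ^ (j - 1), ∑ j ∈ range (n + 1), (j : ℝ) ^ 2 * t ^ (j - 1)))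
      (fun t => (t, 1 - t, 1 / (1 - t) ^ 2, (1 + t) / (1 - t) ^ 3)) atTop (Ico 0 1) := by
  have hne : ∀ t ∈ Ico (0 : ℝ) 1, 1 - t ≠ 0 := fun t ht => by linarith [ht.2]
  have hnorm : ∀ t ∈ Ico (0 : ℝ) 1, ‖t‖ < 1 := fun t ht => by
    rw [Real.norm_of_nonneg ht.1]; exact ht.2
  have hgeom : ∀ n, ∀ t ∈ Ico (0 : ℝ) 1, 0 < ∑ j ∈ range (n + 1), t ^ j :=
    fun n t ht => geom_sum_pos ht.1 n.succ_ne_zero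
  have hid : TendstoLocallyUniformlyOn (fun (_ : ℕ) (t : ℝ) => t) id atTop (Ico 0 1) :=
    Metric.tendstoLocallyUniformlyOn_iff.2 fun ε hε _ _ =>
      ⟨univ, univ_mem, .of_forall fun _ _ _ => by simpa using hε⟩
  have hS : TendstoLocallyUniformlyOn (fun n (t : ℝ) => (∑ j ∈ range (n + 1), t ^ j)⁻¹)
      (fun t => 1 - t) atTop (Ico 0 1) :=
    Antitone.tendstoLocallyUniformlyOn_of_forall_tendsto
      (fun n => (by fun_prop : Continuous _).continuousOn.inv₀ fun t ht => (hgeom n t ht).ne')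
      (fun t ht m n hmn => inv_anti₀ (hgeom m t ht) <|
        sum_le_sum_of_subset_of_nonneg (range_subset_range.2 (by omega))
          fun j _ _ => pow_nonneg ht.1 j)
      (by fun_prop)
      (fun t ht => by
        simpa using ((hasSum_geometric_of_lt_one ht.1 ht.2).tendsto_sum_nat.comp
          (tendsto_add_atTop_nat 1)).inv₀ (inv_ne_zero (hne t ht)))
  have hB := tendstoLocallyUniformlyOn_sum_range_succ_of_nonneg
    (f := fun j (t : ℝ) => (j : ℝ) * t ^ (j - 1)) (by fun_prop)
    (fun j t ht => by have := ht.1; positivity)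
    ((continuousOn_div_one_sub_pow continuous_const 2).mono Ico_subset_Iio_self)
    fun t ht => hasSum_coe_mul_pow_sub_one (hnorm t ht)
  have hA := tendstoLocallyUniformlyOn_sum_range_succ_of_nonneg
    (f := fun j (t : ℝ) => (j : ℝ) ^ 2 * t ^ (j - 1)) (by fun_prop)
    (fun j t ht => by have := ht.1; positivity)
    ((continuousOn_div_one_sub_pow (by fun_prop) 3).mono Ico_subset_Iio_self)
    fun t ht => hasSum_coe_sq_mul_pow_sub_one (hnorm t ht)
  exact hid.prodMk (hS.prodMk (hB.prodMk hA))

section MonomialKernels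

variable (n : ℕ) (z : ℂ)

theorem Kd_X_pow : Kd (fun j => X ^ j) n z = ∑ j ∈ range (n + 1), (‖z‖ ^ 2) ^ j := by
  rw [Kd, Fin.sum_univ_eq_sum_range (fun j => ‖(X ^ j : ℂ[X]).eval z‖ ^ 2)]
  simp only [eval_pow, eval_X, norm_pow, ← pow_mul, mul_comm]

theorem K11_X_pow :
    K11 (fun j => X ^ j) n z = ∑ j ∈ range (n + 1), (j : ℝ) ^ 2 * (‖z‖ ^ 2) ^ (j - 1) := by
  rw [K11, Fin.sum_univ_eq_sum_range (fun j => ‖(derivative (X ^ j : ℂ[X])).eval z‖ ^ 2)]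
  simp only [derivative_X_pow, eval_mul, eval_C, eval_pow, eval_X, norm_mul, Complex.norm_natCast,
    norm_pow, mul_pow, ← pow_mul, mul_comm 2]

theorem K01_X_pow :
    K01 (fun j => X ^ j) n z
      = z * ((∑ j ∈ range (n + 1), (j : ℝ) * (‖z‖ ^ 2) ^ (j - 1) : ℝ) : ℂ) := by
  rw [K01, Fin.sum_univ_eq_sum_range (fun j => (X ^ j : ℂ[X]).eval z *
    conj ((derivative (X ^ j : ℂ[X])).eval z)), Complex.ofReal_sum, mul_sum]
  refine sum_congr rfl fun j _ => ?_
  simp only [derivative_X_pow, eval_mul, eval_natCast, eval_pow, eval_X, map_mul, map_natCast,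
    map_pow]
  rcases j with _ | j
  · simp
  · have hz : z * conj z = ((‖z‖ ^ 2 : ℝ) : ℂ) := by
      rw [Complex.mul_conj, Complex.normSq_eq_norm_sq, Complex.ofReal_pow]
    push_cast [Nat.add_sub_cancel] at hz ⊢
    rw [← hz]
    ring

theorem norm_K01_X_pow_sq :
    ‖K01 (fun j => X ^ j) n z‖ ^ 2
      = ‖z‖ ^ 2 * (∑ j ∈ range (n + 1), (j : ℝ) * (‖z‖ ^ 2) ^ (j - 1)) ^ 2 := by
  rw [K01_X_pow, norm_mul, mul_pow, Complex.norm_real, Real.norm_eq_abs, sq_abs]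

end MonomialKernels

/-- For the monomial basis `φ_j(z) = z^j`, for every `v ∈ ℂ`, locally uniformly on the open
unit disk, `ρ_{n,v}(z) → (1/π)(1/(1−|z|²)² + |v|²|z|²/(1−|z|²)) exp(−|v|²(1−|z|²))`. -/
theorem monomial_density_asymptotics (v : ℂ) :
    TendstoLocallyUniformlyOn
      (fun n z => rhoDens (fun j => Polynomial.X ^ j) n v z)
      (fun z => (1 / Real.pi) *
          (1 / (1 - ‖z‖ ^ 2) ^ 2 + ‖v‖ ^ 2 * ‖z‖ ^ 2 / (1 - ‖z‖ ^ 2)) *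
          Real.exp (-‖v‖ ^ 2 * (1 - ‖z‖ ^ 2)))
      Filter.atTop (Metric.ball (0 : ℂ) 1) := by
  let Φ : ℝ × ℝ × ℝ × ℝ → ℝ := fun ⟨t, u, b, a⟩ =>
    (1 / Real.pi) * (a * u - t * b ^ 2 * u ^ 2 * (1 - ‖v‖ ^ 2 * u)) * Real.exp (-‖v‖ ^ 2 * u)
  have hΦ : Continuous Φ := by fun_prop
  have hlim : ContinuousOn (fun t : ℝ => (t, 1 - t, 1 / (1 - t) ^ 2, (1 + t) / (1 - t) ^ 3))
      (Ico 0 1) :=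
    continuousOn_id.prodMk <| (by fun_prop : Continuous _).continuousOn.prodMk <|
      (continuousOn_div_one_sub_pow continuous_const 2).mono Ico_subset_Iio_self |>.prodMk <|
      (continuousOn_div_one_sub_pow (by fun_prop) 3).mono Ico_subset_Iio_self
  have hdisk : MapsTo (fun z : ℂ => ‖z‖ ^ 2) (ball 0 1) (Ico 0 1) := fun z hz =>
    ⟨by positivity, pow_lt_one₀ (norm_nonneg z) (mem_ball_zero_iff.1 hz) two_ne_zero⟩
  refine (((hΦ.comp_tendstoLocallyUniformlyOn tendstoLocallyUniformlyOn_monomialKernelSums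
    hlim).comp _ hdisk (by fun_prop)).congr fun n z _ => ?_).congr_right fun z hz => ?_
  · simp only [Φ, Function.comp, rhoDens, Kd_X_pow, K11_X_pow, norm_K01_X_pow_sq,
      div_eq_mul_inv]
    ring
  · have : 1 - ‖z‖ ^ 2 ≠ 0 := by linarith [(hdisk hz).2]
    simp only [Φ, Function.comp_apply]
    congr 2
    field_simp
    ring
end
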